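/- Under Assumptions A1–A3 and A5, if in addition range(T) = Λ, then the operator I − X^⊤ S : Λ* → Λ* is an isomorphism, i.e. bijective with bounded inverse. -/

import Mathlib

/-!
Every `μ ∈ Λ*` is uniquely `μ = ν + α M T u` with `A u = T^⊤ ν` (namely `u = Ã⁻¹ T^⊤ μ`), and in
these coordinates `(I - X^⊤ S) μ = (I + X^⊤) ν + α M w` with `w = (I - X) T u`, so `X w = -w`.
Applying `I - X^⊤` kills `(I + X^⊤) ν` and turns `α M w` into `α (M + X^⊤ M X) w`, so by A3 the
`X^⊤`-odd part of the image determines `w`, and its even part then determines the even part of `ν`.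
The remaining data, `u` modulo `range R = ker ((I - X) T)` and the odd part of `ν`, are tied
together by `A u = T^⊤ ν`: an odd functional vanishes on `T (range R)`, so `Â = R^⊤ A R` fixes the
component of `u` in `range R`, and the odd part of `ν` is recovered from `A u` because `T` is onto.
Bijectivity and the open mapping theorem give the bounded inverse.
-/

/-- The transpose (dual map) `B^⊤ : Y* → X*` of a bounded linear operator `B : X → Y`. -/
noncomputable def trOp {X Y : Type*} [NormedAddCommGroup X] [NormedSpace ℂ X]
    [NormedAddCommGroup Y] [NormedSpace ℂ Y] (B : X →L[ℂ] Y) :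
    (Y →L[ℂ] ℂ) →L[ℂ] (X →L[ℂ] ℂ) :=
  (ContinuousLinearMap.compL ℂ X Y ℂ).flip B

/-- The scattering operator `S = −I + α (M + X^⊤ M X) T Ã⁻¹ T^⊤`, with `Atinv = Ã⁻¹`. -/
noncomputable def scatOp {U Lam : Type*}
    [NormedAddCommGroup U] [NormedSpace ℂ U] [NormedAddCommGroup Lam] [NormedSpace ℂ Lam]
    (T : U →L[ℂ] Lam) (X : Lam →L[ℂ] Lam) (M : Lam →L[ℂ] (Lam →L[ℂ] ℂ))
    (Atinv : (U →L[ℂ] ℂ) →L[ℂ] U) (α : ℂ) :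
    (Lam →L[ℂ] ℂ) →L[ℂ] (Lam →L[ℂ] ℂ) :=
  -(ContinuousLinearMap.id ℂ (Lam →L[ℂ] ℂ)) +
    α • (((M + (trOp X).comp (M.comp X)).comp T).comp (Atinv.comp (trOp T)))

theorem ContinuousLinearMap.exists_comp_eq_of_ker_le {𝕜 E F G : Type*} [NontriviallyNormedField 𝕜]
    [NormedAddCommGroup E] [NormedSpace 𝕜 E] [CompleteSpace E]
    [NormedAddCommGroup F] [NormedSpace 𝕜 F] [CompleteSpace F]
    [NormedAddCommGroup G] [NormedSpace 𝕜 G]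
    {T : E →L[𝕜] F} (hT : Function.Surjective T) {f : E →L[𝕜] G}
    (hf : T.ker ≤ f.ker) :
    ∃ g : F →L[𝕜] G, g.comp T = f := by
  obtain ⟨S, hS⟩ := (T : E →ₗ[𝕜] F).exists_rightInverse_of_surjective
    (LinearMap.range_eq_top.2 hT)
  have hTS : ∀ m, T (S m) = m := fun m ↦ congr($hS m)
  have hST : ∀ v, f (S (T v)) = f v := fun v ↦ by
    rw [← sub_eq_zero, ← map_sub]
    exact hf (by simp [hTS])
  have hcont : Continuous ((f : E →ₗ[𝕜] G) ∘ₗ S) := by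
    rw [(T.isQuotientMap hT).continuous_iff]
    convert f.continuous using 1
    ext v
    exact hST v
  exact ⟨⟨_, hcont⟩, ContinuousLinearMap.ext hST⟩

@[simp]
lemma trOp_apply {X Y : Type*} [NormedAddCommGroup X] [NormedSpace ℂ X]
    [NormedAddCommGroup Y] [NormedSpace ℂ Y] (B : X →L[ℂ] Y) (μ : Y →L[ℂ] ℂ) (x : X) :
    trOp B μ x = μ (B x) := rfl

lemma trOp_injective {X Y : Type*} [NormedAddCommGroup X] [NormedSpace ℂ X]
    [NormedAddCommGroup Y] [NormedSpace ℂ Y] {B : X →L[ℂ] Y} (hB : Function.Surjective B) :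
    Function.Injective (trOp B) := fun μ ν h ↦ by
  ext y
  obtain ⟨x, rfl⟩ := hB y
  exact congr($h x)

section Involution

variable {Lam : Type*} [NormedAddCommGroup Lam] [NormedSpace ℂ Lam] {X : Lam →L[ℂ] Lam}

lemma apply_apply_of_comp_self (hX : X.comp X = .id ℂ Lam) (m : Lam) : X (X m) = m :=
  congr($hX m)

lemma trOp_trOp_of_comp_self (hX : X.comp X = .id ℂ Lam) (ν : Lam →L[ℂ] ℂ) :
    trOp X (trOp X ν) = ν := by
  ext m
  simp [apply_apply_of_comp_self hX]

noncomputable def symmOp (M : Lam →L[ℂ] (Lam →L[ℂ] ℂ)) (X : Lam →L[ℂ] Lam) :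
    Lam →L[ℂ] (Lam →L[ℂ] ℂ) :=
  M + (trOp X).comp (M.comp X)

variable {M : Lam →L[ℂ] (Lam →L[ℂ] ℂ)}

lemma trOp_symmOp_apply (hX : X.comp X = .id ℂ Lam) (l : Lam) :
    trOp X (symmOp M X l) = symmOp M X (X l) := by
  ext m
  simp only [symmOp, trOp_apply, add_apply, ContinuousLinearMap.comp_apply,
    apply_apply_of_comp_self hX]
  ring

lemma symmOp_apply_of_apply_eq_neg {w : Lam} (hw : X w = -w) :
    symmOp M X w = M w - trOp X (M w) := by
  simp [symmOp, hw, sub_eq_add_neg]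

lemma apply_symmOp_inv_eq_symmOp_inv_trOp (hX : X.comp X = .id ℂ Lam)
    {Ninv : (Lam →L[ℂ] ℂ) →L[ℂ] Lam}
    (hNl : ∀ l, Ninv (symmOp M X l) = l) (hNr : ∀ μ, symmOp M X (Ninv μ) = μ)
    (ξ : Lam →L[ℂ] ℂ) : X (Ninv ξ) = Ninv (trOp X ξ) := by
  rw [← hNl (X (Ninv ξ)), ← trOp_symmOp_apply hX, hNr]

end Involution

section Scattering

variable {Uhat U Lam : Type*} [NormedAddCommGroup Uhat] [NormedSpace ℂ Uhat]
  [NormedAddCommGroup U] [NormedSpace ℂ U] [NormedAddCommGroup Lam] [NormedSpace ℂ Lam]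
  {R : Uhat →L[ℂ] U} {T : U →L[ℂ] Lam} {X : Lam →L[ℂ] Lam} {A : U →L[ℂ] (U →L[ℂ] ℂ)}
  {M : Lam →L[ℂ] (Lam →L[ℂ] ℂ)} {Atinv : (U →L[ℂ] ℂ) →L[ℂ] U} {α : ℂ}
  {Ahatinv : (Uhat →L[ℂ] ℂ) →L[ℂ] Uhat} {Ninv : (Lam →L[ℂ] ℂ) →L[ℂ] Lam}

lemma exists_apply_eq_trOp_and_eq_add_smul
    (hAt_r : ∀ g, (A + α • ((trOp T).comp (M.comp T))) (Atinv g) = g) (μ : Lam →L[ℂ] ℂ) :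
    ∃ u ν, A u = trOp T ν ∧ μ = ν + α • M (T u) := by
  set u := Atinv (trOp T μ)
  have hu : A u + α • trOp T (M (T u)) = trOp T μ := hAt_r (trOp T μ)
  refine ⟨u, μ - α • M (T u), ?_, by abel⟩
  rw [map_sub, map_smul, ← hu]
  abel

lemma sub_trOp_comp_scatOp_apply (hX : X.comp X = .id ℂ Lam)
    (hAt_l : ∀ u, Atinv ((A + α • ((trOp T).comp (M.comp T))) u) = u)
    {u : U} {ν : Lam →L[ℂ] ℂ} (hu : A u = trOp T ν) :
    (ContinuousLinearMap.id ℂ (Lam →L[ℂ] ℂ) - (trOp X).comp (scatOp T X M Atinv α))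
        (ν + α • M (T u)) = ν + trOp X ν + α • M (T u - X (T u)) := by
  have hAt : Atinv (trOp T (ν + α • M (T u))) = u := by
    conv_rhs => rw [← hAt_l u]
    simp [hu]
  simp only [scatOp, sub_apply, ContinuousLinearMap.id_apply, ContinuousLinearMap.comp_apply,
    add_apply, neg_apply, smul_apply, hAt]
  simp only [map_add, map_neg, map_smul, map_sub, trOp_trOp_of_comp_self hX]
  module

lemma mem_range_iff_apply_eq
    (hA2 : LinearMap.range (R : Uhat →ₗ[ℂ] U) =
      LinearMap.ker ((ContinuousLinearMap.id ℂ Lam - X).comp T : U →ₗ[ℂ] Lam)) (v : U) :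
    v ∈ LinearMap.range (R : Uhat →ₗ[ℂ] U) ↔ X (T v) = T v := by
  simp only [hA2, LinearMap.mem_ker, ContinuousLinearMap.coe_coe, ContinuousLinearMap.comp_apply,
    sub_apply, ContinuousLinearMap.id_apply, sub_eq_zero]
  exact eq_comm

lemma eq_zero_of_apply_eq_trOp
    (hA2 : LinearMap.range (R : Uhat →ₗ[ℂ] U) =
      LinearMap.ker ((ContinuousLinearMap.id ℂ Lam - X).comp T : U →ₗ[ℂ] Lam))
    (hAhat_left : ∀ uhat, Ahatinv (trOp R (A (R uhat))) = uhat)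
    {u : U} {ν : Lam →L[ℂ] ℂ} (hu : A u = trOp T ν) (hν : trOp X ν = -ν)
    (hTu : X (T u) = T u) : u = 0 := by
  obtain ⟨uhat, rfl⟩ := (mem_range_iff_apply_eq hA2 u).2 hTu
  rw [ContinuousLinearMap.coe_coe] at hu ⊢
  have hAhat : trOp R (A (R uhat)) = 0 := by
    ext xhat
    have hfix : X (T (R xhat)) = T (R xhat) := (mem_range_iff_apply_eq hA2 _).1 ⟨xhat, rfl⟩
    have h := congr($hν (T (R xhat)))
    simp only [trOp_apply, hfix, neg_apply] at h
    simp only [trOp_apply, hu, zero_apply]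
    linear_combination h / 2
  rw [← hAhat_left uhat, hAhat, map_zero, map_zero]

lemma exists_trOp_eq_of_trOp_eq_zero [CompleteSpace U] [CompleteSpace Lam]
    (hX : X.comp X = .id ℂ Lam)
    (hA2 : LinearMap.range (R : Uhat →ₗ[ℂ] U) =
      LinearMap.ker ((ContinuousLinearMap.id ℂ Lam - X).comp T : U →ₗ[ℂ] Lam))
    (hT : Function.Surjective T) {f : U →L[ℂ] ℂ} (hf : trOp R f = 0) :
    ∃ ν, trOp X ν = -ν ∧ trOp T ν = f := by
  have hfR : ∀ v, X (T v) = T v → f v = 0 := fun v hv ↦ by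
    obtain ⟨uhat, rfl⟩ := (mem_range_iff_apply_eq hA2 v).2 hv
    exact congr($hf uhat)
  obtain ⟨ν, hν⟩ := T.exists_comp_eq_of_ker_le hT (f := f) fun v hv ↦
    hfR v (by simp_all)
  refine ⟨ν, ?_, hν⟩
  ext m
  obtain ⟨v, rfl⟩ := hT m
  obtain ⟨v', hv'⟩ := hT (X (T v))
  have h : ν (T (v' + v)) = 0 := by
    rw [← ContinuousLinearMap.comp_apply, hν]
    exact hfR _ (by simp [hv', apply_apply_of_comp_self hX, add_comm])
  rw [map_add, map_add, hv'] at h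
  simp only [trOp_apply, neg_apply]
  linear_combination h

theorem sub_trOp_comp_scatOp_injective (hX : X.comp X = .id ℂ Lam)
    (hA2 : LinearMap.range (R : Uhat →ₗ[ℂ] U) =
      LinearMap.ker ((ContinuousLinearMap.id ℂ Lam - X).comp T : U →ₗ[ℂ] Lam))
    (hAhat_left : ∀ uhat, Ahatinv (trOp R (A (R uhat))) = uhat) (hα : α ≠ 0)
    (hNl : ∀ l, Ninv (symmOp M X l) = l)
    (hAt_l : ∀ u, Atinv ((A + α • ((trOp T).comp (M.comp T))) u) = u)
    (hAt_r : ∀ g, (A + α • ((trOp T).comp (M.comp T))) (Atinv g) = g)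
    (hT : Function.Surjective T) :
    Function.Injective
      (ContinuousLinearMap.id ℂ (Lam →L[ℂ] ℂ) - (trOp X).comp (scatOp T X M Atinv α)) := by
  rw [injective_iff_map_eq_zero]
  intro μ hμ
  obtain ⟨u, ν, hu, rfl⟩ := exists_apply_eq_trOp_and_eq_add_smul hAt_r μ
  rw [sub_trOp_comp_scatOp_apply hX hAt_l hu] at hμ
  set w := T u - X (T u)
  have hw : X w = -w := by simp [w, apply_apply_of_comp_self hX]
  -- `I - X^⊤` annihilates `ν + X^⊤ ν` and maps `M w` to `(M + X^⊤ M X) w`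
  have hαNw : α • symmOp M X w = 0 := by
    have h := congr($hμ - trOp X $hμ)
    simp only [map_add, map_smul, trOp_trOp_of_comp_self hX, map_zero, sub_zero] at h
    rw [symmOp_apply_of_apply_eq_neg hw]
    linear_combination (norm := module) h
  have hNw : symmOp M X w = 0 := (smul_eq_zero.1 hαNw).resolve_left hα
  have hw0 : w = 0 := by rw [← hNl w, hNw, map_zero]
  have hTu : X (T u) = T u := (sub_eq_zero.1 hw0).symm
  have hν : trOp X ν = -ν := by
    rw [hw0, map_zero] at hμ
    linear_combination (norm := module) hμ
  obtain rfl := eq_zero_of_apply_eq_trOp hA2 hAhat_left hu hν hTu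
  obtain rfl : ν = 0 := trOp_injective hT (by rw [← hu]; simp)
  simp only [map_zero, zero_add]
  module

theorem sub_trOp_comp_scatOp_surjective [CompleteSpace U] [CompleteSpace Lam]
    (hX : X.comp X = .id ℂ Lam)
    (hA2 : LinearMap.range (R : Uhat →ₗ[ℂ] U) =
      LinearMap.ker ((ContinuousLinearMap.id ℂ Lam - X).comp T : U →ₗ[ℂ] Lam))
    (hAhat_right : ∀ g, trOp R (A (R (Ahatinv g))) = g) (hα : α ≠ 0)
    (hNl : ∀ l, Ninv (symmOp M X l) = l) (hNr : ∀ μ, symmOp M X (Ninv μ) = μ)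
    (hAt_l : ∀ u, Atinv ((A + α • ((trOp T).comp (M.comp T))) u) = u)
    (hT : Function.Surjective T) :
    Function.Surjective
      (ContinuousLinearMap.id ℂ (Lam →L[ℂ] ℂ) - (trOp X).comp (scatOp T X M Atinv α)) := by
  intro η
  set w := α⁻¹ • Ninv (η - trOp X η)
  have hαNw : α • symmOp M X w = η - trOp X η := by
    simp [w, smul_smul, hα, hNr]
  have hw : X w = -w := by
    simp only [w, map_smul, apply_symmOp_inv_eq_symmOp_inv_trOp hX hNl hNr, map_sub,
      trOp_trOp_of_comp_self hX]
    module
  set g := (2 : ℂ)⁻¹ • (η - α • M w)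
  have hg : trOp X g = g := by
    rw [symmOp_apply_of_apply_eq_neg hw] at hαNw
    simp only [g, map_smul, map_sub]
    linear_combination (norm := module) (2 : ℂ)⁻¹ • hαNw
  obtain ⟨u₀, hu₀⟩ := hT ((2 : ℂ)⁻¹ • w)
  set uhat := Ahatinv (trOp R (trOp T g - A u₀))
  set u := u₀ + R uhat
  have hf : trOp R (A u - trOp T g) = 0 := by
    simp only [u, uhat, map_add, map_sub, hAhat_right]
    abel
  obtain ⟨ν', hν'X, hν'T⟩ := exists_trOp_eq_of_trOp_eq_zero hX hA2 hT hf
  have hu : A u = trOp T (g + ν') := by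
    rw [map_add (trOp T), hν'T]
    abel
  have hTu : T u - X (T u) = w := by
    have hfix : X (T (R uhat)) = T (R uhat) := (mem_range_iff_apply_eq hA2 _).1 ⟨uhat, rfl⟩
    simp only [u, map_add, hu₀, hfix, map_smul, hw]
    module
  refine ⟨g + ν' + α • M (T u), ?_⟩
  rw [sub_trOp_comp_scatOp_apply hX hAt_l hu, hTu, map_add, hg, hν'X]
  simp only [g]
  module

end Scattering

theorem statement15_general
    {Uhat U Lam : Type*}
    [NormedAddCommGroup Uhat] [InnerProductSpace ℂ Uhat]
    [NormedAddCommGroup U] [InnerProductSpace ℂ U] [CompleteSpace U]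
    [NormedAddCommGroup Lam] [InnerProductSpace ℂ Lam] [CompleteSpace Lam]
    (R : Uhat →L[ℂ] U) (T : U →L[ℂ] Lam) (X : Lam →L[ℂ] Lam)
    -- Assumption A2
    (hX2 : X.comp X = ContinuousLinearMap.id ℂ Lam)
    (hA2 : LinearMap.range (R : Uhat →ₗ[ℂ] U) = LinearMap.ker ((ContinuousLinearMap.id ℂ Lam - X).comp T : U →ₗ[ℂ] Lam))
    (A : U →L[ℂ] (U →L[ℂ] ℂ))
    -- `Â = R^⊤ A R` bijective with bounded inverse
    (Ahatinv : (Uhat →L[ℂ] ℂ) →L[ℂ] Uhat)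
    (hAhat_left : ∀ uhat : Uhat, Ahatinv (trOp R (A (R uhat))) = uhat)
    (hAhat_right : ∀ g : Uhat →L[ℂ] ℂ, trOp R (A (R (Ahatinv g))) = g)
    (α : ℂ) (hα : α ≠ 0)
    (M : Lam →L[ℂ] (Lam →L[ℂ] ℂ))
    -- Assumption A3: `M + X^⊤ M X` has a bounded inverse
    (Ninv : (Lam →L[ℂ] ℂ) →L[ℂ] Lam)
    (hNl : ∀ l : Lam, Ninv ((M + (trOp X).comp (M.comp X)) l) = l)
    (hNr : ∀ μ : Lam →L[ℂ] ℂ, (M + (trOp X).comp (M.comp X)) (Ninv μ) = μ)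
    -- Assumption A5: `Ã = A + α T^⊤ M T` has a bounded inverse
    (Atinv : (U →L[ℂ] ℂ) →L[ℂ] U)
    (hAt_l : ∀ u : U, Atinv ((A + α • ((trOp T).comp (M.comp T))) u) = u)
    (hAt_r : ∀ g : U →L[ℂ] ℂ, (A + α • ((trOp T).comp (M.comp T))) (Atinv g) = g)
    -- surjectivity of the trace operator
    (hTsurj : LinearMap.range (T : U →ₗ[ℂ] Lam) = ⊤) :
    ∃ J : (Lam →L[ℂ] ℂ) →L[ℂ] (Lam →L[ℂ] ℂ),
      (∀ μ : Lam →L[ℂ] ℂ,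
        J ((ContinuousLinearMap.id ℂ (Lam →L[ℂ] ℂ) -
          (trOp X).comp (scatOp T X M Atinv α)) μ) = μ) ∧
      (∀ μ : Lam →L[ℂ] ℂ,
        (ContinuousLinearMap.id ℂ (Lam →L[ℂ] ℂ) -
          (trOp X).comp (scatOp T X M Atinv α)) (J μ) = μ) := by
  have hT : Function.Surjective T := LinearMap.range_eq_top.1 hTsurj
  have hinj := sub_trOp_comp_scatOp_injective hX2 hA2 hAhat_left hα hNl hAt_l hAt_r hT
  have hsurj := sub_trOp_comp_scatOp_surjective hX2 hA2 hAhat_right hα hNl hNr hAt_l hT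
  let e := ContinuousLinearEquiv.ofBijective _
    (LinearMap.ker_eq_bot.2 hinj) (LinearMap.range_eq_top.2 hsurj)
  exact ⟨e.symm, e.symm_apply_apply, e.apply_symm_apply⟩

/-- if additionally `range(T) = Λ`, the operator `I − X^⊤ S` is an
isomorphism of `Λ*`, i.e. it has a bounded two-sided inverse. -/
theorem statement15
    {Uhat U Lam : Type*}
    [NormedAddCommGroup Uhat] [InnerProductSpace ℂ Uhat] [CompleteSpace Uhat]
    [NormedAddCommGroup U] [InnerProductSpace ℂ U] [CompleteSpace U]
    [NormedAddCommGroup Lam] [InnerProductSpace ℂ Lam] [CompleteSpace Lam]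
    (R : Uhat →L[ℂ] U) (T : U →L[ℂ] Lam) (X : Lam →L[ℂ] Lam)
    -- Assumption A1
    (hRinj : LinearMap.ker (R : Uhat →ₗ[ℂ] U) = ⊥)
    (hRclosed : IsClosed (Set.range R))
    -- Assumption A2
    (hX2 : X.comp X = ContinuousLinearMap.id ℂ Lam)
    (hA2 : LinearMap.range (R : Uhat →ₗ[ℂ] U) = LinearMap.ker ((ContinuousLinearMap.id ℂ Lam - X).comp T : U →ₗ[ℂ] Lam))
    (A : U →L[ℂ] (U →L[ℂ] ℂ))
    -- `Â = R^⊤ A R` bijective with bounded inverse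
    (Ahatinv : (Uhat →L[ℂ] ℂ) →L[ℂ] Uhat)
    (hAhat_left : ∀ uhat : Uhat, Ahatinv (trOp R (A (R uhat))) = uhat)
    (hAhat_right : ∀ g : Uhat →L[ℂ] ℂ, trOp R (A (R (Ahatinv g))) = g)
    (α : ℂ) (hα : α ≠ 0)
    (M : Lam →L[ℂ] (Lam →L[ℂ] ℂ))
    -- Assumption A3: `M + X^⊤ M X` has a bounded inverse
    (Ninv : (Lam →L[ℂ] ℂ) →L[ℂ] Lam)
    (hNl : ∀ l : Lam, Ninv ((M + (trOp X).comp (M.comp X)) l) = l)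
    (hNr : ∀ μ : Lam →L[ℂ] ℂ, (M + (trOp X).comp (M.comp X)) (Ninv μ) = μ)
    -- Assumption A5: `Ã = A + α T^⊤ M T` has a bounded inverse
    (Atinv : (U →L[ℂ] ℂ) →L[ℂ] U)
    (hAt_l : ∀ u : U, Atinv ((A + α • ((trOp T).comp (M.comp T))) u) = u)
    (hAt_r : ∀ g : U →L[ℂ] ℂ, (A + α • ((trOp T).comp (M.comp T))) (Atinv g) = g)
    -- surjectivity of the trace operator
    (hTsurj : LinearMap.range (T : U →ₗ[ℂ] Lam) = ⊤) :
    ∃ J : (Lam →L[ℂ] ℂ) →L[ℂ] (Lam →L[ℂ] ℂ),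
      (∀ μ : Lam →L[ℂ] ℂ,
        J ((ContinuousLinearMap.id ℂ (Lam →L[ℂ] ℂ) -
          (trOp X).comp (scatOp T X M Atinv α)) μ) = μ) ∧
      (∀ μ : Lam →L[ℂ] ℂ,
        (ContinuousLinearMap.id ℂ (Lam →L[ℂ] ℂ) -
          (trOp X).comp (scatOp T X M Atinv α)) (J μ) = μ) :=
  statement15_general R T X hX2 hA2 A Ahatinv hAhat_left hAhat_right α hα M Ninv hNl hNr Atinv hAt_l
    hAt_r hTsurj
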